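/- arXiv:2509.10626 — 3 statements merged into one kernel-verified Lean document; each statement's English description precedes it below -/
import Mathlib

section
/- Chain rule factorization of a joint distribution at a cut vertex: let M be a probability tensor on Fin n₁ × ⋯ × Fin n_s whose marginals are μ_σ, and suppose the index set {1,...,s} is partitioned as V₁ ∪ V₂ with V₁ ∩ V₂ = {σ}. If M satisfies the conditional independence M_{i} = proj_{V₁}(M)_{i_{V₁}} · proj_{V₂}(M)_{i_{V₂}} / μ_σ(i_σ) whenever μ_σ(i_σ) > 0, then D_KL(M ∥ K₁ ⊗ K₂) = D_KL(proj_{V₁}(M) ∥ K₁) + D_KL(proj_{V₂}(M) ∥ K₂) + H(μ_σ), where H(μ) = -Σ_r μ(r) log μ(r), and K₁, K₂ depend only on the coordinates in V₁ and V₂ respectively, with (K₁ ⊗ K₂)_i = (K₁)_{i_{V₁}} · (K₂)_{i_{V₂}}. -/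
/-!
Under the conditional independence `M = M₁ M₂ / μ`, on the support of `M` the log-ratio
`log (M / (K₁ K₂))` splits as `log (M₁ / K₁) + log (M₂ / K₂) - log μ`. Averaging each of the three
terms against `M` only sees the corresponding marginal of `M`, which turns them into the two
divergences and the entropy of `μ`.
-/

open Finset

theorem Real.log_mul_div_div_mul {m₁ m₂ μ k₁ k₂ : ℝ} (hm₁ : m₁ ≠ 0) (hm₂ : m₂ ≠ 0) (hμ : μ ≠ 0)
    (hk₁ : k₁ ≠ 0) (hk₂ : k₂ ≠ 0) :
    Real.log (m₁ * m₂ / μ / (k₁ * k₂))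
      = Real.log (m₁ / k₁) + Real.log (m₂ / k₂) - Real.log μ := by
  rw [Real.log_div (div_ne_zero (mul_ne_zero hm₁ hm₂) hμ) (mul_ne_zero hk₁ hk₂),
    Real.log_div (mul_ne_zero hm₁ hm₂) hμ, Real.log_div hm₁ hk₁, Real.log_div hm₂ hk₂,
    Real.log_mul hm₁ hm₂, Real.log_mul hk₁ hk₂]
  ring

section Marginals

variable {A B C : Type*} [Fintype A] [Fintype B] [Fintype C] (M : A × B × C → ℝ)

theorem weighted_sum_eq_marginal₁₂ {M₁ : A × B → ℝ} (hM₁ : ∀ a b, M₁ (a, b) = ∑ c, M (a, b, c))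
    (f : A × B → ℝ) : ∑ p, M p * f (p.1, p.2.1) = ∑ q, M₁ q * f q := by
  simp only [Fintype.sum_prod_type, hM₁, sum_mul]

theorem weighted_sum_eq_marginal₂₃ {M₂ : B × C → ℝ} (hM₂ : ∀ b c, M₂ (b, c) = ∑ a, M (a, b, c))
    (g : B × C → ℝ) : ∑ p, M p * g (p.2.1, p.2.2) = ∑ q, M₂ q * g q := by
  simp only [Fintype.sum_prod_type, hM₂, sum_mul]
  rw [sum_comm]
  exact sum_congr rfl fun b _ => sum_comm

theorem weighted_sum_eq_marginal₂ {μ : B → ℝ} (hμ : ∀ b, ∑ a, ∑ c, M (a, b, c) = μ b)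
    (h : B → ℝ) : ∑ p, M p * h p.2.1 = ∑ b, μ b * h b := by
  simp only [Fintype.sum_prod_type, ← hμ, sum_mul]
  exact sum_comm

end Marginals

theorem kl_decomposition_at_cut_general {A B C : Type*} [Fintype A] [Fintype B] [Fintype C]
    (M : A × B × C → ℝ) (μ : B → ℝ) (K₁ : A × B → ℝ) (K₂ : B × C → ℝ)
    (hK₁ : ∀ p, 0 < K₁ p) (hK₂ : ∀ p, 0 < K₂ p)
    (hM0 : ∀ p, 0 ≤ M p)
    (hμ : ∀ b, ∑ a, ∑ c, M (a, b, c) = μ b)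
    (M₁ : A × B → ℝ) (hM₁ : ∀ a b, M₁ (a, b) = ∑ c, M (a, b, c))
    (M₂ : B × C → ℝ) (hM₂ : ∀ b c, M₂ (b, c) = ∑ a, M (a, b, c))
    (hci : ∀ a b c, M (a, b, c) = M₁ (a, b) * M₂ (b, c) / μ b) :
    ∑ p, M p * Real.log (M p / (K₁ (p.1, p.2.1) * K₂ (p.2.1, p.2.2)))
      = (∑ q, M₁ q * Real.log (M₁ q / K₁ q))
        + (∑ q, M₂ q * Real.log (M₂ q / K₂ q))
        + (-∑ b, μ b * Real.log (μ b)) := by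
  have hM₁pos {a b c} (h : 0 < M (a, b, c)) : 0 < M₁ (a, b) :=
    hM₁ a b ▸ sum_pos' (fun _ _ => hM0 _) ⟨c, mem_univ _, h⟩
  have hM₂pos {a b c} (h : 0 < M (a, b, c)) : 0 < M₂ (b, c) :=
    hM₂ b c ▸ sum_pos' (fun _ _ => hM0 _) ⟨a, mem_univ _, h⟩
  have hμpos {a b c} (h : 0 < M (a, b, c)) : 0 < μ b := by
    simp only [← hμ, ← hM₁]
    exact sum_pos' (fun a' _ => hM₁ a' b ▸ sum_nonneg fun _ _ => hM0 _) ⟨a, mem_univ _, hM₁pos h⟩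
  have hsplit : ∀ p : A × B × C, M p * Real.log (M p / (K₁ (p.1, p.2.1) * K₂ (p.2.1, p.2.2)))
      = M p * Real.log (M₁ (p.1, p.2.1) / K₁ (p.1, p.2.1))
        + M p * Real.log (M₂ (p.2.1, p.2.2) / K₂ (p.2.1, p.2.2)) - M p * Real.log (μ p.2.1) := by
    rintro ⟨a, b, c⟩
    rcases (hM0 (a, b, c)).eq_or_lt with h0 | hpos
    · simp [← h0]
    · rw [← mul_add, ← mul_sub, hci a b c, Real.log_mul_div_div_mul (hM₁pos hpos).ne'
        (hM₂pos hpos).ne' (hμpos hpos).ne' (hK₁ _).ne' (hK₂ _).ne']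
  rw [sum_congr rfl fun p _ => hsplit p, sum_sub_distrib, sum_add_distrib,
    weighted_sum_eq_marginal₁₂ M hM₁ (fun q => Real.log (M₁ q / K₁ q)),
    weighted_sum_eq_marginal₂₃ M hM₂ (fun q => Real.log (M₂ q / K₂ q)),
    weighted_sum_eq_marginal₂ M hμ (fun b => Real.log (μ b))]
  ring

/-- Chain rule factorization of KL divergence at a cut vertex. -/
theorem kl_decomposition_at_cut {A B C : Type*} [Fintype A] [Fintype B] [Fintype C]
    (M : A × B × C → ℝ) (μ : B → ℝ) (K₁ : A × B → ℝ) (K₂ : B × C → ℝ)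
    (hK₁ : ∀ p, 0 < K₁ p) (hK₂ : ∀ p, 0 < K₂ p)
    (hM0 : ∀ p, 0 ≤ M p) (hM1 : ∑ p, M p = 1)
    (hμpos : ∀ b, 0 < μ b)
    (hμ : ∀ b, ∑ a, ∑ c, M (a, b, c) = μ b)
    (M₁ : A × B → ℝ) (hM₁ : ∀ a b, M₁ (a, b) = ∑ c, M (a, b, c))
    (M₂ : B × C → ℝ) (hM₂ : ∀ b c, M₂ (b, c) = ∑ a, M (a, b, c))
    (hci : ∀ a b c, M (a, b, c) = M₁ (a, b) * M₂ (b, c) / μ b) :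
    ∑ p, M p * Real.log (M p / (K₁ (p.1, p.2.1) * K₂ (p.2.1, p.2.2)))
      = (∑ q, M₁ q * Real.log (M₁ q / K₁ q))
        + (∑ q, M₂ q * Real.log (M₂ q / K₂ q))
        + (-∑ b, μ b * Real.log (μ b)) :=
  kl_decomposition_at_cut_general M μ K₁ K₂ hK₁ hK₂ hM0 hμ M₁ hM₁ M₂ hM₂ hci
end

section
/- Tree-structured optimal coupling decomposition (two subtrees): let T be a tree on vertices {1,...,s} with strictly positive vertex marginals μ_σ, split at a non-leaf vertex σ into subtrees T₁ = (V₁, E₁) and T₂ = (V₂, E₂) with V₁ ∩ V₂ = {σ}. Let K, K₁, K₂ be the Gibbs kernels exp(-C/η) where C decomposes additively over the edges of T, T₁, T₂ respectively, so that K_i = (K₁)_{i_{V₁}} · (K₂)_{i_{V₂}}. Then the minimizer M*_T of D_KL(M ∥ K) over couplings M with marginals {μ_σ} satisfies (M*_T)_i = (M*_{T₁})_{i_{V₁}} · (M*_{T₂})_{i_{V₂}} / μ_σ(i_σ), where M*_{T_k} minimizes D_KL(· ∥ K_k) over couplings with marginals {μ_τ : τ ∈ V_k}. -/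
/-!
Gluing two subtree couplings along the cut vertex, `Q = M₁ ⊗ M₂ / μ_σ₀`, gives a coupling with
`KL(Q ‖ K₁ ⊗ K₂) = KL(M₁ ‖ K₁) + KL(M₂ ‖ K₂) - ∑ μ_σ₀ log μ_σ₀`. For an arbitrary coupling `N`
with subtree marginals `N₁, N₂`, the chain rule writes `KL(N ‖ K₁ ⊗ K₂)` as the same expression
in `N₁, N₂` plus `KL(N ‖ N₁ ⊗ N₂ / μ_σ₀) ≥ 0`. So the glued product of the subtree optimizers is
optimal for the whole tree, and strict convexity of `KL(· ‖ K)` makes the optimizer unique.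
-/

open Real Finset

namespace TreeCoupling

section Pushforward

variable {α β γ : Type*} [Fintype α] [DecidableEq β] [DecidableEq γ]

def pushforward (f : α → β) (N : α → ℝ) (y : β) : ℝ :=
  ∑ x, if f x = y then N x else 0

lemma sum_pushforward_mul [Fintype β] (f : α → β) (N : α → ℝ) (g : β → ℝ) :
    ∑ y, pushforward f N y * g y = ∑ x, N x * g (f x) := by
  simp only [pushforward, sum_mul, ite_mul, zero_mul]
  rw [sum_comm]
  simp

lemma sum_pushforward [Fintype β] (f : α → β) (N : α → ℝ) :
    ∑ y, pushforward f N y = ∑ x, N x := by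
  simpa using sum_pushforward_mul f N 1

lemma pushforward_comp [Fintype β] (f : α → β) (g : β → γ) (N : α → ℝ) :
    pushforward g (pushforward f N) = pushforward (g ∘ f) N := by
  funext z
  have := sum_pushforward_mul f N fun y => if g y = z then 1 else 0
  simp only [mul_ite, mul_one, mul_zero] at this
  exact this

lemma pushforward_add (f : α → β) (N N' : α → ℝ) :
    pushforward f (N + N') = pushforward f N + pushforward f N' := by
  funext y
  simp only [pushforward, Pi.add_apply, ← sum_add_distrib, ite_add_ite, add_zero]

lemma pushforward_smul (f : α → β) (c : ℝ) (N : α → ℝ) :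
    pushforward f (c • N) = c • pushforward f N := by
  funext y
  simp only [pushforward, Pi.smul_apply, smul_eq_mul, mul_sum, mul_ite, mul_zero]

lemma pushforward_nonneg {f : α → β} {N : α → ℝ} (hN : ∀ x, 0 ≤ N x) (y : β) :
    0 ≤ pushforward f N y :=
  sum_nonneg fun x _ => by split_ifs <;> simp [hN x]

lemma le_pushforward_apply {f : α → β} {N : α → ℝ} (hN : ∀ x, 0 ≤ N x) (x : α) :
    N x ≤ pushforward f N (f x) :=
  calc N x = if f x = f x then N x else 0 := (if_pos rfl).symm
    _ ≤ pushforward f N (f x) :=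
      single_le_sum (f := fun x' => if f x' = f x then N x' else 0)
        (fun x' _ => by split_ifs <;> simp [hN x']) (mem_univ x)

end Pushforward

section KullbackLeibler

variable {α : Type*} [Fintype α]

-- `Real.log 0 = 0` supplies the convention `0 * log 0 = 0`.
noncomputable def klDiv (N K : α → ℝ) : ℝ := ∑ x, N x * log (N x / K x)

lemma sub_le_mul_log_div {x q : ℝ} (hx : 0 ≤ x) (hq : 0 ≤ q) (hxq : 0 < x → 0 < q) :
    x - q ≤ x * log (x / q) := by
  rcases hx.eq_or_lt with rfl | hx
  · simpa using hq
  have := one_sub_inv_le_log_of_pos (div_pos hx (hxq hx))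
  rw [inv_div] at this
  calc x - q = x * (1 - q / x) := by field_simp
    _ ≤ x * log (x / q) := mul_le_mul_of_nonneg_left this hx.le

lemma klDiv_nonneg {N Q : α → ℝ} (hN : ∀ x, 0 ≤ N x) (hQ : ∀ x, 0 ≤ Q x)
    (hNQ : ∀ x, 0 < N x → 0 < Q x) (hsum : ∑ x, N x = ∑ x, Q x) : 0 ≤ klDiv N Q :=
  calc 0 = ∑ x, (N x - Q x) := by rw [sum_sub_distrib, hsum, sub_self]
    _ ≤ klDiv N Q := sum_le_sum fun x _ => sub_le_mul_log_div (hN x) (hQ x) (hNQ x)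

lemma strictConvexOn_mul_log_div {k : ℝ} (hk : k ≠ 0) :
    StrictConvexOn ℝ (Set.Ici 0) fun t => t * log (t / k) := by
  refine (strictConvexOn_mul_log.sub_concaveOn
    ((LinearMap.mulRight ℝ (log k)).concaveOn (convex_Ici 0))).congr fun t _ => ?_
  rcases eq_or_ne t 0 with rfl | ht
  · simp
  · simp only [Pi.sub_apply, LinearMap.mulRight_apply, log_div ht hk]; ring

lemma strictConvexOn_klDiv {K : α → ℝ} (hK : ∀ x, K x ≠ 0) :
    StrictConvexOn ℝ (Set.Ici 0) fun N => klDiv N K := by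
  refine ⟨convex_Ici 0, fun N hN N' hN' hne a b ha hb hab => ?_⟩
  obtain ⟨x₀, hx₀⟩ := Function.ne_iff.mp hne
  have hf x := strictConvexOn_mul_log_div (hK x)
  simp only [klDiv, smul_eq_mul, mul_sum, ← sum_add_distrib, Pi.add_apply, Pi.smul_apply]
  exact sum_lt_sum (fun x _ => (hf x).convexOn.2 (hN x) (hN' x) ha.le hb.le hab)
    ⟨x₀, mem_univ _, (hf x₀).2 (hN x₀) (hN' x₀) hx₀ ha hb hab⟩

end KullbackLeibler

lemma mul_log_div_mul_eq {x a b u k₁ k₂ : ℝ} (hab : x ≠ 0 → a ≠ 0 ∧ b ≠ 0) (hu : u ≠ 0)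
    (hk₁ : k₁ ≠ 0) (hk₂ : k₂ ≠ 0) :
    x * log (x / (k₁ * k₂)) = x * log (x / (a * b / u)) + x * log (a / k₁)
      + x * log (b / k₂) - x * log u := by
  rcases eq_or_ne x 0 with rfl | hx
  · simp
  obtain ⟨ha, hb⟩ := hab hx
  rw [log_div hx (by positivity), log_div hx (by positivity), log_div (by positivity) hu,
    log_mul ha hb, log_mul hk₁ hk₂, log_div ha hk₁, log_div hb hk₂]
  ring

section Coupling

variable {ι : Type*} [Fintype ι] [DecidableEq ι] {β : ι → Type*} [∀ i, Fintype (β i)]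
  [∀ i, DecidableEq (β i)]

def IsCoupling (μ : ∀ i, β i → ℝ) (N : (∀ i, β i) → ℝ) : Prop :=
  (∀ x, 0 ≤ N x) ∧ ∀ i r, pushforward (fun x => x i) N r = μ i r

lemma convex_setOf_isCoupling (μ : ∀ i, β i → ℝ) : Convex ℝ {N | IsCoupling μ N} := by
  rintro N ⟨hN, hNμ⟩ N' ⟨hN', hN'μ⟩ a b ha hb hab
  refine ⟨fun x => add_nonneg (mul_nonneg ha (hN x)) (mul_nonneg hb (hN' x)), fun i r => ?_⟩
  simp only [pushforward_add, pushforward_smul, Pi.add_apply, Pi.smul_apply, smul_eq_mul, hNμ,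
    hN'μ, ← add_mul, hab, one_mul]

lemma pushforward_eval_restrict (s : Finset ι) (N : (∀ i, β i) → ℝ) (τ : s) :
    pushforward (fun y => y τ) (pushforward s.restrict N) = pushforward (fun x => x τ) N :=
  pushforward_comp _ _ N

lemma IsCoupling.restrict {μ : ∀ i, β i → ℝ} {N : (∀ i, β i) → ℝ} (hN : IsCoupling μ N)
    (s : Finset ι) : IsCoupling (fun τ : s => μ τ) (pushforward s.restrict N) :=
  ⟨pushforward_nonneg hN.1, fun τ r => by rw [pushforward_eval_restrict]; exact hN.2 τ r⟩

lemma IsCoupling.of_restrict {μ : ∀ i, β i → ℝ} {N : (∀ i, β i) → ℝ} {s t : Finset ι}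
    (hst : s ∪ t = univ) (hN : ∀ x, 0 ≤ N x)
    (hs : IsCoupling (fun τ : s => μ τ) (pushforward s.restrict N))
    (ht : IsCoupling (fun τ : t => μ τ) (pushforward t.restrict N)) : IsCoupling μ N := by
  refine ⟨hN, fun i r => ?_⟩
  rcases mem_union.mp (hst ▸ mem_univ i) with hi | hi
  · exact (congrFun (pushforward_eval_restrict s N ⟨i, hi⟩) r).symm.trans (hs.2 ⟨i, hi⟩ r)
  · exact (congrFun (pushforward_eval_restrict t N ⟨i, hi⟩) r).symm.trans (ht.2 ⟨i, hi⟩ r)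

end Coupling

/-- For a tree cut at `σ₀`, `Ω`, `Ω₁`, `Ω₂` are the joint and the two subtree configurations and
`Γ` the states of `σ₀` (`isFiberProduct_restrict`). -/
structure IsFiberProduct {Ω Ω₁ Ω₂ Γ : Type*} (r₁ : Ω → Ω₁) (r₂ : Ω → Ω₂) (p₁ : Ω₁ → Γ)
    (p₂ : Ω₂ → Γ) : Prop where
  comm : ∀ i, p₁ (r₁ i) = p₂ (r₂ i)
  existsUnique : ∀ a b, p₁ a = p₂ b → ∃! i, r₁ i = a ∧ r₂ i = b

noncomputable def gluedProduct {Ω Ω₁ Ω₂ Γ : Type*} (r₁ : Ω → Ω₁) (r₂ : Ω → Ω₂) (p₁ : Ω₁ → Γ)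
    (A : Ω₁ → ℝ) (B : Ω₂ → ℝ) (ν : Γ → ℝ) (i : Ω) : ℝ :=
  A (r₁ i) * B (r₂ i) / ν (p₁ (r₁ i))

lemma gluedProduct_nonneg {Ω Ω₁ Ω₂ Γ : Type*} (r₁ : Ω → Ω₁) (r₂ : Ω → Ω₂) (p₁ : Ω₁ → Γ)
    {A : Ω₁ → ℝ} {B : Ω₂ → ℝ} {ν : Γ → ℝ} (hA : ∀ a, 0 ≤ A a) (hB : ∀ b, 0 ≤ B b)
    (hν : ∀ γ, 0 ≤ ν γ) (i : Ω) : 0 ≤ gluedProduct r₁ r₂ p₁ A B ν i :=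
  div_nonneg (mul_nonneg (hA _) (hB _)) (hν _)

lemma isFiberProduct_restrict {ι : Type*} [Fintype ι] [DecidableEq ι] {β : ι → Type*}
    {s t : Finset ι} {σ₀ : ι} (hst : s ∪ t = univ) (hcut : s ∩ t ⊆ {σ₀}) (hs : σ₀ ∈ s)
    (ht : σ₀ ∈ t) :
    IsFiberProduct (s.restrict : (∀ i, β i) → ∀ τ : s, β τ) t.restrict (fun a => a ⟨σ₀, hs⟩)
      (fun b => b ⟨σ₀, ht⟩) := by
  refine ⟨fun _ => rfl, fun a b hab => ?_⟩
  have hmem (σ : ι) (hσ : σ ∉ s) : σ ∈ t := (mem_union.mp (hst ▸ mem_univ σ)).resolve_left hσ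
  refine ⟨fun σ => if hσ : σ ∈ s then a ⟨σ, hσ⟩ else b ⟨σ, hmem σ hσ⟩, ⟨?_, ?_⟩, ?_⟩
  · funext τ
    exact dif_pos τ.2
  · funext ⟨σ, hσt⟩
    by_cases hσs : σ ∈ s
    · obtain rfl : σ = σ₀ := mem_singleton.mp (hcut (mem_inter.mpr ⟨hσs, hσt⟩))
      exact (dif_pos hσs).trans hab
    · exact dif_neg hσs
  · rintro x ⟨rfl, rfl⟩
    funext σ
    by_cases hσ : σ ∈ s
    · rw [dif_pos hσ]; rfl
    · rw [dif_neg hσ]; rfl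

namespace IsFiberProduct

variable {Ω Ω₁ Ω₂ Γ : Type*} {r₁ : Ω → Ω₁} {r₂ : Ω → Ω₂} {p₁ : Ω₁ → Γ} {p₂ : Ω₂ → Γ}

lemma symm (h : IsFiberProduct r₁ r₂ p₁ p₂) : IsFiberProduct r₂ r₁ p₂ p₁ :=
  ⟨fun i => (h.comm i).symm, fun b a hba => by
    simpa only [and_comm] using h.existsUnique a b hba.symm⟩

lemma gluedProduct_swap (h : IsFiberProduct r₁ r₂ p₁ p₂) (A : Ω₁ → ℝ) (B : Ω₂ → ℝ)
    (ν : Γ → ℝ) : gluedProduct r₂ r₁ p₂ B A ν = gluedProduct r₁ r₂ p₁ A B ν :=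
  funext fun i => by simp only [gluedProduct, h.comm i, mul_comm]

variable [Fintype Ω] [DecidableEq Γ]

lemma pushforward_comp_snd [DecidableEq Ω₁] [Fintype Ω₂] (h : IsFiberProduct r₁ r₂ p₁ p₂)
    (g : Ω₂ → ℝ) :
    pushforward r₁ (g ∘ r₂) = pushforward p₂ g ∘ p₁ := by
  funext a
  simp only [pushforward, Function.comp_apply, ← sum_filter]
  refine sum_nbij r₂ (fun i hi => ?_) (fun i hi j hj hij => ?_) (fun b hb => ?_) fun _ _ => rfl
  · simp only [mem_filter, mem_univ, true_and] at hi ⊢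
    rw [← hi, h.comm]
  · simp only [coe_filter, mem_univ, true_and, Set.mem_ofPred_eq] at hi hj
    obtain ⟨k, -, hk⟩ := h.existsUnique a (r₂ i) (by rw [← hi, h.comm])
    exact (hk i ⟨hi, rfl⟩).trans (hk j ⟨hj, hij.symm⟩).symm
  · simp only [coe_filter, mem_univ, true_and, Set.mem_ofPred_eq] at hb
    obtain ⟨i, ⟨hi, rfl⟩, -⟩ := h.existsUnique a b hb.symm
    exact ⟨i, by simpa using hi, rfl⟩

lemma pushforward_fst_gluedProduct [DecidableEq Ω₁] [Fintype Ω₂]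
    (h : IsFiberProduct r₁ r₂ p₁ p₂) {A : Ω₁ → ℝ} {B : Ω₂ → ℝ} {ν : Γ → ℝ}
    (hν : ∀ γ, ν γ ≠ 0) (hB : pushforward p₂ B = ν) :
    pushforward r₁ (gluedProduct r₁ r₂ p₁ A B ν) = A := by
  funext a
  calc pushforward r₁ (gluedProduct r₁ r₂ p₁ A B ν) a
      = A a / ν (p₁ a) * pushforward r₁ (B ∘ r₂) a := by
        simp only [pushforward, gluedProduct, mul_sum, mul_ite, mul_zero, Function.comp_apply]
        refine sum_congr rfl fun i _ => ?_
        split_ifs with hi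
        · subst hi; ring
        · rfl
    _ = A a := by rw [h.pushforward_comp_snd, Function.comp_apply, hB, div_mul_cancel₀ _ (hν _)]

lemma pushforward_snd_gluedProduct [Fintype Ω₁] [DecidableEq Ω₂]
    (h : IsFiberProduct r₁ r₂ p₁ p₂) {A : Ω₁ → ℝ} {B : Ω₂ → ℝ} {ν : Γ → ℝ}
    (hν : ∀ γ, ν γ ≠ 0) (hA : pushforward p₁ A = ν) :
    pushforward r₂ (gluedProduct r₁ r₂ p₁ A B ν) = B := by
  rw [← h.gluedProduct_swap]
  exact h.symm.pushforward_fst_gluedProduct hν hA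

variable [Fintype Ω₁] [Fintype Ω₂] [Fintype Γ] [DecidableEq Ω₁] [DecidableEq Ω₂]

lemma klDiv_gluedProduct (h : IsFiberProduct r₁ r₂ p₁ p₂) {A : Ω₁ → ℝ} {B : Ω₂ → ℝ}
    {ν : Γ → ℝ} {K₁ : Ω₁ → ℝ} {K₂ : Ω₂ → ℝ} (hν : ∀ γ, ν γ ≠ 0) (hA : pushforward p₁ A = ν)
    (hB : pushforward p₂ B = ν) (hK₁ : ∀ a, K₁ a ≠ 0) (hK₂ : ∀ b, K₂ b ≠ 0) :
    klDiv (gluedProduct r₁ r₂ p₁ A B ν) (fun i => K₁ (r₁ i) * K₂ (r₂ i))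
      = klDiv A K₁ + klDiv B K₂ - ∑ γ, ν γ * log (ν γ) := by
  set Q := gluedProduct r₁ r₂ p₁ A B ν
  have hsplit (i : Ω) : Q i * log (Q i / (K₁ (r₁ i) * K₂ (r₂ i)))
      = Q i * log (A (r₁ i) / K₁ (r₁ i)) + Q i * log (B (r₂ i) / K₂ (r₂ i))
        - Q i * log (ν (p₁ (r₁ i))) := by
    have hQQ : Q i * log (Q i / (A (r₁ i) * B (r₂ i) / ν (p₁ (r₁ i)))) = 0 := by
      change Q i * log (Q i / Q i) = 0
      rcases eq_or_ne (Q i) 0 with hQ | hQ <;> simp [hQ]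
    rw [mul_log_div_mul_eq (x := Q i) (a := A (r₁ i)) (b := B (r₂ i)) (u := ν (p₁ (r₁ i)))
      (fun hQ => mul_ne_zero_iff.mp (div_ne_zero_iff.mp hQ).1) (hν _) (hK₁ _) (hK₂ _), hQQ,
      zero_add]
  simp only [klDiv, hsplit, sum_sub_distrib, sum_add_distrib]
  rw [← sum_pushforward_mul r₁ Q (fun a => log (A a / K₁ a)),
    ← sum_pushforward_mul r₂ Q (fun b => log (B b / K₂ b)),
    ← sum_pushforward_mul r₁ Q (fun a => log (ν (p₁ a))),
    h.pushforward_fst_gluedProduct hν hB, h.pushforward_snd_gluedProduct hν hA,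
    ← sum_pushforward_mul p₁ A (fun γ => log (ν γ)), hA]

lemma klDiv_pushforward_add_le (h : IsFiberProduct r₁ r₂ p₁ p₂) {N : Ω → ℝ} {ν : Γ → ℝ}
    {K₁ : Ω₁ → ℝ} {K₂ : Ω₂ → ℝ} (hN : ∀ i, 0 ≤ N i) (hν : ∀ γ, 0 < ν γ)
    (hNν : pushforward (fun i => p₁ (r₁ i)) N = ν) (hK₁ : ∀ a, K₁ a ≠ 0)
    (hK₂ : ∀ b, K₂ b ≠ 0) :
    klDiv (pushforward r₁ N) K₁ + klDiv (pushforward r₂ N) K₂ - ∑ γ, ν γ * log (ν γ)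
      ≤ klDiv N (fun i => K₁ (r₁ i) * K₂ (r₂ i)) := by
  set P₁ := pushforward r₁ N
  set P₂ := pushforward r₂ N
  have hP₂ : pushforward p₂ P₂ = ν := by
    rw [pushforward_comp, ← hNν]
    exact congrArg (pushforward · N) (funext fun i => (h.comm i).symm)
  have hN₁ (i : Ω) (hi : N i ≠ 0) : 0 < P₁ (r₁ i) :=
    ((hN i).lt_of_ne' hi).trans_le (le_pushforward_apply hN i)
  have hN₂ (i : Ω) (hi : N i ≠ 0) : 0 < P₂ (r₂ i) :=
    ((hN i).lt_of_ne' hi).trans_le (le_pushforward_apply hN i)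
  set Q := gluedProduct r₁ r₂ p₁ P₁ P₂ ν
  -- the chain rule below leaves the defect `klDiv N Q`, nonnegative by Gibbs' inequality
  have hgibbs : 0 ≤ klDiv N Q := by
    refine klDiv_nonneg hN (gluedProduct_nonneg r₁ r₂ p₁ (pushforward_nonneg hN)
      (pushforward_nonneg hN) fun γ => (hν γ).le) (fun i hi => ?_) ?_
    · exact div_pos (mul_pos (hN₁ i hi.ne') (hN₂ i hi.ne')) (hν _)
    · rw [← sum_pushforward r₁ N, ← sum_pushforward r₁ Q,
        h.pushforward_fst_gluedProduct (fun γ => (hν γ).ne') hP₂]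
  have hsplit (i : Ω) : N i * log (N i / (K₁ (r₁ i) * K₂ (r₂ i)))
      = N i * log (N i / Q i) + N i * log (P₁ (r₁ i) / K₁ (r₁ i))
        + N i * log (P₂ (r₂ i) / K₂ (r₂ i)) - N i * log (ν (p₁ (r₁ i))) :=
    mul_log_div_mul_eq (fun hi => ⟨(hN₁ i hi).ne', (hN₂ i hi).ne'⟩) (hν _).ne' (hK₁ _) (hK₂ _)
  have hchain : klDiv N (fun i => K₁ (r₁ i) * K₂ (r₂ i))
      = klDiv N Q + klDiv P₁ K₁ + klDiv P₂ K₂ - ∑ γ, ν γ * log (ν γ) := by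
    simp only [klDiv, hsplit, sum_sub_distrib, sum_add_distrib]
    rw [← sum_pushforward_mul r₁ N (fun a => log (P₁ a / K₁ a)),
      ← sum_pushforward_mul r₂ N (fun b => log (P₂ b / K₂ b)),
      ← sum_pushforward_mul (fun i => p₁ (r₁ i)) N (fun γ => log (ν γ)), hNν]
  linarith

end IsFiberProduct

end TreeCoupling

open TreeCoupling

theorem tree_optimal_coupling_decomposition_general
    (s : ℕ) (n : Fin s → ℕ)
    (μ : (σ : Fin s) → Fin (n σ) → ℝ)
    (hμpos : ∀ σ r, 0 < μ σ r)
    (V₁ V₂ : Finset (Fin s)) (σ₀ : Fin s)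
    (hcover : V₁ ∪ V₂ = Finset.univ) (hcut : V₁ ∩ V₂ = {σ₀})
    (K₁ : ((τ : V₁) → Fin (n τ)) → ℝ) (K₂ : ((τ : V₂) → Fin (n τ)) → ℝ)
    (hK₁ : ∀ j, 0 < K₁ j) (hK₂ : ∀ j, 0 < K₂ j)
    (M : ((σ : Fin s) → Fin (n σ)) → ℝ)
    (M₁ : ((τ : V₁) → Fin (n τ)) → ℝ)
    (M₂ : ((τ : V₂) → Fin (n τ)) → ℝ)
    -- M is the optimal coupling for the full kernel K = K₁ ⊗ K₂:
    (hMmem : (∀ i, 0 ≤ M i) ∧ ∀ (σ : Fin s) (r : Fin (n σ)),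
      ∑ i : (τ : Fin s) → Fin (n τ), (if i σ = r then M i else 0) = μ σ r)
    (hMopt : ∀ N : ((σ : Fin s) → Fin (n σ)) → ℝ,
      ((∀ i, 0 ≤ N i) ∧ ∀ (σ : Fin s) (r : Fin (n σ)),
        ∑ i : (τ : Fin s) → Fin (n τ), (if i σ = r then N i else 0) = μ σ r) →
      ∑ i, M i * Real.log (M i / (K₁ (fun τ => i τ.1) * K₂ (fun τ => i τ.1)))
        ≤ ∑ i, N i * Real.log (N i / (K₁ (fun τ => i τ.1) * K₂ (fun τ => i τ.1))))
    -- M₁ is the optimal coupling for the first subtree: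
    (hM₁mem : (∀ j, 0 ≤ M₁ j) ∧ ∀ (τ : V₁) (r : Fin (n τ)),
      ∑ j : (υ : V₁) → Fin (n υ), (if j τ = r then M₁ j else 0) = μ τ r)
    (hM₁opt : ∀ N : ((τ : V₁) → Fin (n τ)) → ℝ,
      ((∀ j, 0 ≤ N j) ∧ ∀ (τ : V₁) (r : Fin (n τ)),
        ∑ j : (υ : V₁) → Fin (n υ), (if j τ = r then N j else 0) = μ τ r) →
      ∑ j, M₁ j * Real.log (M₁ j / K₁ j) ≤ ∑ j, N j * Real.log (N j / K₁ j))
    -- M₂ is the optimal coupling for the second subtree: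
    (hM₂mem : (∀ j, 0 ≤ M₂ j) ∧ ∀ (τ : V₂) (r : Fin (n τ)),
      ∑ j : (υ : V₂) → Fin (n υ), (if j τ = r then M₂ j else 0) = μ τ r)
    (hM₂opt : ∀ N : ((τ : V₂) → Fin (n τ)) → ℝ,
      ((∀ j, 0 ≤ N j) ∧ ∀ (τ : V₂) (r : Fin (n τ)),
        ∑ j : (υ : V₂) → Fin (n υ), (if j τ = r then N j else 0) = μ τ r) →
      ∑ j, M₂ j * Real.log (M₂ j / K₂ j) ≤ ∑ j, N j * Real.log (N j / K₂ j)) :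
    ∀ i : (σ : Fin s) → Fin (n σ),
      M i = M₁ (fun τ => i τ.1) * M₂ (fun τ => i τ.1) / μ σ₀ (i σ₀) := by
  obtain ⟨h₁, h₂⟩ := mem_inter.mp (hcut ▸ mem_singleton_self σ₀)
  have hfib := isFiberProduct_restrict (β := fun σ => Fin (n σ)) hcover hcut.subset h₁ h₂
  have hμne (r : Fin (n σ₀)) : μ σ₀ r ≠ 0 := (hμpos σ₀ r).ne'
  have hK₁ne (j : (τ : V₁) → Fin (n τ)) : K₁ j ≠ 0 := (hK₁ j).ne'
  have hK₂ne (j : (τ : V₂) → Fin (n τ)) : K₂ j ≠ 0 := (hK₂ j).ne'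
  have hM₁σ₀ : pushforward (fun j => j ⟨σ₀, h₁⟩) M₁ = μ σ₀ := funext (hM₁mem.2 ⟨σ₀, h₁⟩)
  have hM₂σ₀ : pushforward (fun j => j ⟨σ₀, h₂⟩) M₂ = μ σ₀ := funext (hM₂mem.2 ⟨σ₀, h₂⟩)
  set Q := gluedProduct (Ω := (σ : Fin s) → Fin (n σ)) V₁.restrict V₂.restrict
    (fun j => j ⟨σ₀, h₁⟩) M₁ M₂ (μ σ₀)
  have hQ : IsCoupling μ Q := by
    refine IsCoupling.of_restrict hcover
      (gluedProduct_nonneg _ _ _ hM₁mem.1 hM₂mem.1 fun r => (hμpos σ₀ r).le) ?_ ?_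
    · rw [hfib.pushforward_fst_gluedProduct hμne hM₂σ₀]; exact hM₁mem
    · rw [hfib.pushforward_snd_gluedProduct hμne hM₁σ₀]; exact hM₂mem
  set K := fun i : (σ : Fin s) → Fin (n σ) => K₁ (V₁.restrict i) * K₂ (V₂.restrict i)
  have hQmin : IsMinOn (klDiv · K) {N | IsCoupling μ N} Q := fun N hN =>
    calc klDiv Q K = klDiv M₁ K₁ + klDiv M₂ K₂ - ∑ r, μ σ₀ r * log (μ σ₀ r) :=
          hfib.klDiv_gluedProduct hμne hM₁σ₀ hM₂σ₀ hK₁ne hK₂ne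
      _ ≤ klDiv (pushforward V₁.restrict N) K₁ + klDiv (pushforward V₂.restrict N) K₂
          - ∑ r, μ σ₀ r * log (μ σ₀ r) := by
          gcongr
          exacts [hM₁opt _ (hN.restrict V₁), hM₂opt _ (hN.restrict V₂)]
      _ ≤ klDiv N K :=
          hfib.klDiv_pushforward_add_le hN.1 (hμpos σ₀) (funext (hN.2 σ₀)) hK₁ne hK₂ne
  have hKne (i : (σ : Fin s) → Fin (n σ)) : K i ≠ 0 := mul_ne_zero (hK₁ne _) (hK₂ne _)
  have hconv : StrictConvexOn ℝ {N | IsCoupling μ N} (klDiv · K) :=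
    (strictConvexOn_klDiv hKne).subset (fun N hN => hN.1) (convex_setOf_isCoupling μ)
  have hMQ : M = Q := hconv.eq_of_isMinOn hMopt hQmin hMmem hQ
  exact congrFun hMQ

/-- Tree-structured optimal coupling decomposition at a cut vertex:
the optimal coupling for a kernel factorizing over two vertex subsets
`V₁, V₂` intersecting in a single vertex `σ₀` is the glued product of the
two subtree optimal couplings. -/
theorem tree_optimal_coupling_decomposition
    (s : ℕ) (n : Fin s → ℕ)
    (μ : (σ : Fin s) → Fin (n σ) → ℝ)
    (hμpos : ∀ σ r, 0 < μ σ r) (hμ1 : ∀ σ, ∑ r, μ σ r = 1)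
    (V₁ V₂ : Finset (Fin s)) (σ₀ : Fin s)
    (hcover : V₁ ∪ V₂ = Finset.univ) (hcut : V₁ ∩ V₂ = {σ₀})
    (K₁ : ((τ : V₁) → Fin (n τ)) → ℝ) (K₂ : ((τ : V₂) → Fin (n τ)) → ℝ)
    (hK₁ : ∀ j, 0 < K₁ j) (hK₂ : ∀ j, 0 < K₂ j)
    (M : ((σ : Fin s) → Fin (n σ)) → ℝ)
    (M₁ : ((τ : V₁) → Fin (n τ)) → ℝ)
    (M₂ : ((τ : V₂) → Fin (n τ)) → ℝ)
    -- M is the optimal coupling for the full kernel K = K₁ ⊗ K₂: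
    (hMmem : (∀ i, 0 ≤ M i) ∧ ∀ (σ : Fin s) (r : Fin (n σ)),
      ∑ i : (τ : Fin s) → Fin (n τ), (if i σ = r then M i else 0) = μ σ r)
    (hMopt : ∀ N : ((σ : Fin s) → Fin (n σ)) → ℝ,
      ((∀ i, 0 ≤ N i) ∧ ∀ (σ : Fin s) (r : Fin (n σ)),
        ∑ i : (τ : Fin s) → Fin (n τ), (if i σ = r then N i else 0) = μ σ r) →
      ∑ i, M i * Real.log (M i / (K₁ (fun τ => i τ.1) * K₂ (fun τ => i τ.1)))
        ≤ ∑ i, N i * Real.log (N i / (K₁ (fun τ => i τ.1) * K₂ (fun τ => i τ.1))))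
    -- M₁ is the optimal coupling for the first subtree:
    (hM₁mem : (∀ j, 0 ≤ M₁ j) ∧ ∀ (τ : V₁) (r : Fin (n τ)),
      ∑ j : (υ : V₁) → Fin (n υ), (if j τ = r then M₁ j else 0) = μ τ r)
    (hM₁opt : ∀ N : ((τ : V₁) → Fin (n τ)) → ℝ,
      ((∀ j, 0 ≤ N j) ∧ ∀ (τ : V₁) (r : Fin (n τ)),
        ∑ j : (υ : V₁) → Fin (n υ), (if j τ = r then N j else 0) = μ τ r) →
      ∑ j, M₁ j * Real.log (M₁ j / K₁ j) ≤ ∑ j, N j * Real.log (N j / K₁ j))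
    -- M₂ is the optimal coupling for the second subtree:
    (hM₂mem : (∀ j, 0 ≤ M₂ j) ∧ ∀ (τ : V₂) (r : Fin (n τ)),
      ∑ j : (υ : V₂) → Fin (n υ), (if j τ = r then M₂ j else 0) = μ τ r)
    (hM₂opt : ∀ N : ((τ : V₂) → Fin (n τ)) → ℝ,
      ((∀ j, 0 ≤ N j) ∧ ∀ (τ : V₂) (r : Fin (n τ)),
        ∑ j : (υ : V₂) → Fin (n υ), (if j τ = r then N j else 0) = μ τ r) →
      ∑ j, M₂ j * Real.log (M₂ j / K₂ j) ≤ ∑ j, N j * Real.log (N j / K₂ j)) :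
    ∀ i : (σ : Fin s) → Fin (n σ),
      M i = M₁ (fun τ => i τ.1) * M₂ (fun τ => i τ.1) / μ σ₀ (i σ₀) :=
  tree_optimal_coupling_decomposition_general s n μ hμpos V₁ V₂ σ₀ hcover hcut K₁ K₂ hK₁ hK₂ M M₁ M₂
    hMmem hMopt hM₁mem hM₁opt hM₂mem hM₂opt
end

section
/- Optimal tree-MSB cost decomposes over edges: for a tree T = (V, E) on vertices {1,...,s} with strictly positive marginals μ_σ and edge-additive Gibbs kernel K, the optimal value satisfies D_KL(M*_T ∥ K) = Σ_{(σ₁,σ₂)∈E} D_KL(M*_{σ₁σ₂} ∥ K_{σ₁σ₂}) + Σ_{σ=1}^{s} (deg(σ) - 1) · H(μ_σ), where M*_{σ₁σ₂} is the optimal bimarginal Schrödinger bridge coupling between μ_{σ₁} and μ_{σ₂} with kernel K_{σ₁σ₂} = exp(-C_{σ₁σ₂}/η), deg(σ) is the degree of vertex σ in T, and H(μ) = -Σ_r μ(r) log μ(r). -/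
/-!
Couplings `p_ab` of `μ_a` and `μ_b` along the edges of a forest glue to the coupling
`W = ∏_v μ_v · ∏_{(a,b) ∈ E} p_ab / (μ_a ⊗ μ_b)` of all the `μ_v`, with pair marginal `p_ab` on
each edge. To see this, detach a leaf edge at its leaf `ℓ`: the factor it contributes sums to one
against `μ_ℓ`, so nothing away from `ℓ` changes, and before it is attached `ℓ` is independent of
the rest.

For `K = ∏_e K_e` and any coupling `M` of the `μ_v` with edge marginals `P_e`,
`Σ_i M_i log (W_i / K_i) = Σ_e ⟨P_e, log (p_e / K_e)⟩ + Σ_v (deg v - 1) H(μ_v)`.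
With `M = W` and `p = Msb`, the right-hand side is the cost of a feasible coupling. With `p = P`,
Gibbs' inequality `KL(M ‖ W) ≥ 0` bounds the cost of `M` from below by
`Σ_e KL(P_e ‖ K_e) + Σ_v (deg v - 1) H(μ_v)`, and each `KL(P_e ‖ K_e)` is at least the
bimarginal optimum.
-/

open Finset Real

theorem SimpleGraph.IsAcyclic.exists_existsUnique_adj {V : Type*} [Finite V] {G : SimpleGraph V}
    (hG : G.IsAcyclic) {a b : V} (hab : G.Adj a b) : ∃ u, ∃! w, G.Adj u w := by
  have : Nonempty V := ⟨a⟩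
  obtain ⟨u, v, p, hp, hmax⟩ := SimpleGraph.Walk.exists_isPath_forall_isPath_length_le_length G
  have hnil : ¬ p.Nil := by
    intro hnil
    have := hmax a b (.cons hab .nil) (by simp [hab.ne])
    simp [hnil.length_eq_zero] at this
  refine ⟨u, p.snd, p.adj_snd hnil, fun w hw => hG.eq_snd_of_adj_start hp hw ?_⟩
  by_contra hwp
  have := hmax w v (.cons hw.symm p) (hp.cons hwp)
  simp at this

theorem DependsOn.apply_update {ι : Type*} [DecidableEq ι] {α : ι → Type*} {β : Type*}
    {f : (∀ v, α v) → β} {ℓ : ι} (hf : DependsOn f {ℓ}ᶜ) (i : ∀ v, α v) (x : α ℓ) :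
    f (Function.update i ℓ x) = f i :=
  hf fun _ hv => Function.update_of_ne hv _ _

theorem dependsOn_comp_update {ι : Type*} [DecidableEq ι] {α : ι → Type*} {β : Type*}
    (f : (∀ v, α v) → β) (ℓ : ι) (x : α ℓ) :
    DependsOn (fun i => f (Function.update i ℓ x)) {ℓ}ᶜ := by
  intro i j h
  refine congrArg f (funext fun v => ?_)
  rcases eq_or_ne v ℓ with rfl | hv
  · simp
  · simp [hv, h v hv]

theorem sub_le_mul_log_div {p q : ℝ} (hp : 0 ≤ p) (hq : 0 ≤ q) (hpq : q = 0 → p = 0) :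
    p - q ≤ p * log (p / q) := by
  rcases hq.eq_or_lt with rfl | hq
  · simp [hpq rfl]
  calc p - q = q * (p / q - 1) := by field_simp
    _ ≤ q * (p / q * log (p / q)) := by gcongr; exact self_sub_one_le_mul_log (by positivity)
    _ = p * log (p / q) := by field_simp

theorem sum_mul_log_div_nonneg {β : Type*} [Fintype β] {P Q : β → ℝ} (hP : ∀ i, 0 ≤ P i)
    (hQ : ∀ i, 0 ≤ Q i) (hPQ : ∀ i, Q i = 0 → P i = 0) (hsum : ∑ i, P i = ∑ i, Q i) :
    0 ≤ ∑ i, P i * log (P i / Q i) :=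
  calc 0 = ∑ i, (P i - Q i) := by rw [sum_sub_distrib, hsum, sub_self]
    _ ≤ ∑ i, P i * log (P i / Q i) :=
      sum_le_sum fun i _ => sub_le_mul_log_div (hP i) (hQ i) (hPQ i)

namespace TreeCoupling

variable {ι : Type*}

def edgeDegree [DecidableEq ι] (E : Finset (ι × ι)) (v : ι) : ℕ :=
  #{e ∈ E | e.1 = v ∨ e.2 = v}

theorem sum_add_eq_sum_edgeDegree_smul [Fintype ι] [DecidableEq ι] {M : Type*} [AddCommMonoid M]
    {E : Finset (ι × ι)} (hloop : ∀ e ∈ E, e.1 ≠ e.2) (f : ι → M) :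
    ∑ e ∈ E, (f e.1 + f e.2) = ∑ v, edgeDegree E v • f v := by
  simp only [edgeDegree, card_eq_sum_ones, sum_smul, sum_filter, ite_smul, one_smul, zero_smul]
  rw [sum_comm]
  refine sum_congr rfl fun e he => ?_
  have hends : ({v | e.1 = v ∨ e.2 = v} : Finset ι) = {e.1, e.2} := by ext; simp [eq_comm]
  rw [← sum_filter, hends, sum_pair (hloop e he)]

theorem exists_leaf_edge [Finite ι] [DecidableEq ι] {E : Finset (ι × ι)}
    (hloop : ∀ e ∈ E, e.1 ≠ e.2) (horient : ∀ e ∈ E, (e.2, e.1) ∉ E)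
    (hacyc : (SimpleGraph.fromRel fun a b => (a, b) ∈ E).IsAcyclic) (hne : E.Nonempty) :
    ∃ e₀ ∈ E, ∃ ℓ, (e₀.1 = ℓ ∨ e₀.2 = ℓ) ∧ ∀ e ∈ E.erase e₀, e.1 ≠ ℓ ∧ e.2 ≠ ℓ := by
  obtain ⟨e, he⟩ := hne
  obtain ⟨ℓ, w, hw, huniq⟩ := hacyc.exists_existsUnique_adj (a := e.1) (b := e.2)
    (by simp [SimpleGraph.fromRel_adj, hloop e he, he])
  have hat : ∀ e ∈ E, e.1 = ℓ ∨ e.2 = ℓ → e = (ℓ, w) ∨ e = (w, ℓ) := by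
    rintro ⟨x, y⟩ he hxy
    have := hloop _ he
    rcases hxy with rfl | rfl
    · have := huniq y (by simp_all [SimpleGraph.fromRel_adj])
      simp [this]
    · have := huniq x (by simp_all [SimpleGraph.fromRel_adj, eq_comm])
      simp [this]
  rw [SimpleGraph.fromRel_adj] at hw
  obtain ⟨e₀, he₀, hinc⟩ : ∃ e₀ ∈ E, e₀.1 = ℓ ∨ e₀.2 = ℓ := by
    rcases hw.2 with h | h
    exacts [⟨_, h, Or.inl rfl⟩, ⟨_, h, Or.inr rfl⟩]
  refine ⟨e₀, he₀, ℓ, hinc, fun e he => ?_⟩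
  rw [mem_erase] at he
  by_contra hinc'
  rcases hat e he.2 (by tauto) with rfl | rfl <;> rcases hat e₀ he₀ hinc with rfl | rfl <;>
    first | exact he.1 rfl | exact horient _ he₀ he.2

variable {α : ι → Type*}

section Marginals

variable [Fintype ι] [DecidableEq ι] [∀ v, Fintype (α v)] [∀ v, DecidableEq (α v)]

variable (F : (∀ v, α v) → ℝ)

def marginal (v : ι) (x : α v) : ℝ :=
  ∑ i, if i v = x then F i else 0

def pairMarginal (a b : ι) (x : α a) (y : α b) : ℝ :=
  ∑ i, if i a = x ∧ i b = y then F i else 0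

theorem sum_mul_apply_eq_sum_marginal_mul (v : ι) (h : α v → ℝ) :
    ∑ i, F i * h (i v) = ∑ x, marginal F v x * h x := by
  simp only [marginal, sum_mul, ite_mul, zero_mul]
  rw [sum_comm]
  refine sum_congr rfl fun i _ => ?_
  rw [sum_ite_eq]
  simp

theorem sum_mul_apply_eq_sum_pairMarginal_mul (a b : ι) (h : α a → α b → ℝ) :
    ∑ i, F i * h (i a) (i b) = ∑ x, ∑ y, pairMarginal F a b x y * h x y := by
  simp only [pairMarginal, sum_mul, ite_mul, zero_mul, ite_and]
  rw [sum_congr rfl fun x _ => sum_comm, sum_comm]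
  refine sum_congr rfl fun i _ => ?_
  simp [sum_ite_eq]

theorem sum_marginal (v : ι) : ∑ x, marginal F v x = ∑ i, F i := by
  simpa using (sum_mul_apply_eq_sum_marginal_mul F v fun _ => (1 : ℝ)).symm

theorem sum_pairMarginal_right (a b : ι) (x : α a) :
    ∑ y, pairMarginal F a b x y = marginal F a x := by
  simp only [pairMarginal, marginal, ite_and]
  rw [sum_comm]
  refine sum_congr rfl fun i _ => ?_
  split_ifs <;> simp [*]

theorem sum_pairMarginal_left (a b : ι) (y : α b) :
    ∑ x, pairMarginal F a b x y = marginal F b y := by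
  simp only [pairMarginal, marginal, ite_and]
  rw [sum_comm]
  refine sum_congr rfl fun i _ => ?_
  split_ifs <;> simp [*]

theorem pairMarginal_comm (a b : ι) (x : α a) (y : α b) :
    pairMarginal F a b x y = pairMarginal F b a y x := by
  simp only [pairMarginal, and_comm]

theorem pairMarginal_mul_apply (a b : ι) (h : α a → α b → ℝ) (x : α a) (y : α b) :
    pairMarginal (fun i => F i * h (i a) (i b)) a b x y = pairMarginal F a b x y * h x y := by
  simp only [pairMarginal, sum_mul, ite_mul, zero_mul]
  refine sum_congr rfl fun i _ => ?_
  split_ifs with hi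
  · rw [hi.1, hi.2]
  · rfl

variable {F}

theorem pairMarginal_nonneg (hF : ∀ i, 0 ≤ F i) (a b : ι) (x : α a) (y : α b) :
    0 ≤ pairMarginal F a b x y :=
  sum_nonneg fun i _ => by split_ifs <;> simp [hF i]

theorem le_pairMarginal (hF : ∀ i, 0 ≤ F i) (i : ∀ v, α v) (a b : ι) :
    F i ≤ pairMarginal F a b (i a) (i b) := by
  have := single_le_sum (f := fun j => if j a = i a ∧ j b = i b then F j else 0)
    (fun j _ => by split_ifs <;> simp [hF j]) (mem_univ i)
  simpa [pairMarginal] using this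

variable {ℓ : ι} {G : (∀ v, α v) → ℝ}

theorem marginal_mul_apply (F : (∀ v, α v) → ℝ) (v : ι) (w : α v → ℝ) (x : α v) :
    marginal (fun i => w (i v) * F i) v x = w x * marginal F v x := by
  simp only [marginal, mul_sum, mul_ite, mul_zero]
  refine sum_congr rfl fun i _ => ?_
  split_ifs with hi
  · rw [hi]
  · rfl

theorem marginal_eq_marginal_of_dependsOn (hG : DependsOn G {ℓ}ᶜ) (x y : α ℓ) :
    marginal G ℓ x = marginal G ℓ y := by
  simp only [marginal, ← sum_filter]
  refine sum_nbij' (fun i => Function.update i ℓ y) (fun i => Function.update i ℓ x)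
    ?_ ?_ ?_ ?_ fun i _ => (hG.apply_update i y).symm <;> simp +contextual

theorem marginal_mul_of_dependsOn (hG : DependsOn G {ℓ}ᶜ) {w : α ℓ → ℝ}
    (hw : ∑ x, w x = 1) (x : α ℓ) :
    marginal (fun i => w (i ℓ) * G i) ℓ x = w x * ∑ i, w (i ℓ) * G i := by
  rw [← sum_marginal _ ℓ]
  simp only [marginal_mul_apply, marginal_eq_marginal_of_dependsOn hG _ x, ← sum_mul, hw, one_mul]

theorem sum_mul_mul_eq_sum_of_dependsOn (hG : DependsOn G {ℓ}ᶜ) {w : α ℓ → ℝ}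
    (hw : ∑ x, w x = 1) {κ : (∀ v, α v) → ℝ}
    (hκ : ∀ i, ∑ x, w x * κ (Function.update i ℓ x) = 1) :
    ∑ i, w (i ℓ) * G i * κ i = ∑ i, w (i ℓ) * G i := by
  have hfiber : ∀ x, marginal (fun i => w (i ℓ) * G i * κ i) ℓ x
      = marginal (fun i => w (i ℓ) * (G i * κ (Function.update i ℓ x))) ℓ x := by
    intro x
    refine sum_congr rfl fun i _ => ?_
    split_ifs with hi
    · simp only [← hi, Function.update_eq_self, mul_assoc]
    · rfl
  have hGκ : ∀ x, DependsOn (fun i => G i * κ (Function.update i ℓ x)) {ℓ}ᶜ :=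
    fun x i j h => by
      have := dependsOn_comp_update κ ℓ x h
      simp only at this ⊢
      rw [hG h, this]
  calc ∑ i, w (i ℓ) * G i * κ i
      = ∑ x, w x * ∑ i, w (i ℓ) * (G i * κ (Function.update i ℓ x)) := by
        rw [← sum_marginal _ ℓ]
        simp only [hfiber, marginal_mul_of_dependsOn (hGκ _) hw]
    _ = ∑ i, w (i ℓ) * G i * ∑ x, w x * κ (Function.update i ℓ x) := by
        simp only [mul_sum]
        rw [sum_comm]
        refine sum_congr rfl fun i _ => sum_congr rfl fun x _ => by ring
    _ = ∑ i, w (i ℓ) * G i := by simp only [hκ, mul_one]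

theorem pairMarginal_mul_of_dependsOn (hG : DependsOn G {ℓ}ᶜ) {w : α ℓ → ℝ}
    (hw : ∑ x, w x = 1) {u : ι} (hu : u ≠ ℓ) (x : α ℓ) (y : α u) :
    pairMarginal (fun i => w (i ℓ) * G i) ℓ u x y
      = w x * marginal (fun i => w (i ℓ) * G i) u y := by
  have hGu : DependsOn (fun i => if i u = y then G i else 0) {ℓ}ᶜ :=
    fun i j h => by simp only [hG h, h u hu]
  simpa only [pairMarginal, marginal, ite_and, mul_ite, mul_zero]
    using marginal_mul_of_dependsOn hGu hw x

end Marginals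

noncomputable def edgeFactor (μ : ∀ v, α v → ℝ) (p : ∀ a b, α a → α b → ℝ) (e : ι × ι)
    (i : ∀ v, α v) : ℝ :=
  p e.1 e.2 (i e.1) (i e.2) / (μ e.1 (i e.1) * μ e.2 (i e.2))

section EdgeFactor

variable [DecidableEq ι] [∀ v, Fintype (α v)] {μ : ∀ v, α v → ℝ} {p : ∀ a b, α a → α b → ℝ}

theorem sum_mul_edgeFactor_update (hμ : ∀ v x, μ v x ≠ 0) {e : ι × ι} (he : e.1 ≠ e.2)
    (hrow : ∀ x, ∑ y, p e.1 e.2 x y = μ e.1 x) (hcol : ∀ y, ∑ x, p e.1 e.2 x y = μ e.2 y)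
    {ℓ : ι} (hℓ : e.1 = ℓ ∨ e.2 = ℓ) (i : ∀ v, α v) :
    ∑ x, μ ℓ x * edgeFactor μ p e (Function.update i ℓ x) = 1 := by
  obtain ⟨a, b⟩ := e
  rcases hℓ with rfl | rfl
  · simp only [edgeFactor, Function.update_self, Function.update_of_ne he.symm]
    calc ∑ x, μ a x * (p a b x (i b) / (μ a x * μ b (i b)))
        = (∑ x, p a b x (i b)) / μ b (i b) := by
          rw [sum_div]
          exact sum_congr rfl fun x _ => by field_simp [hμ a x]
      _ = 1 := by rw [hcol, div_self (hμ b (i b))]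
  · simp only [edgeFactor, Function.update_self, Function.update_of_ne he]
    calc ∑ y, μ b y * (p a b (i a) y / (μ a (i a) * μ b y))
        = (∑ y, p a b (i a) y) / μ a (i a) := by
          rw [sum_div]
          exact sum_congr rfl fun y _ => by field_simp [hμ b y]
      _ = 1 := by rw [hrow, div_self (hμ a (i a))]

end EdgeFactor

section Tree

variable [Fintype ι] (μ : ∀ v, α v → ℝ) (p : ∀ a b, α a → α b → ℝ)

noncomputable def treeCoupling (E : Finset (ι × ι)) (i : ∀ v, α v) : ℝ :=
  (∏ v, μ v (i v)) * ∏ e ∈ E, edgeFactor μ p e i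

variable {μ p} {E : Finset (ι × ι)}

theorem treeCoupling_nonneg (hμ : ∀ v x, 0 ≤ μ v x) (hp : ∀ e ∈ E, ∀ x y, 0 ≤ p e.1 e.2 x y)
    (i : ∀ v, α v) : 0 ≤ treeCoupling μ p E i :=
  mul_nonneg (prod_nonneg fun v _ => hμ v _) <| prod_nonneg fun e he =>
    div_nonneg (hp e he _ _) (mul_nonneg (hμ _ _) (hμ _ _))

theorem treeCoupling_ne_zero (hμ : ∀ v x, μ v x ≠ 0) {i : ∀ v, α v}
    (hp : ∀ e ∈ E, p e.1 e.2 (i e.1) (i e.2) ≠ 0) : treeCoupling μ p E i ≠ 0 :=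
  mul_ne_zero (prod_ne_zero_iff.2 fun v _ => hμ v _) <| prod_ne_zero_iff.2 fun e he =>
    div_ne_zero (hp e he) (mul_ne_zero (hμ _ _) (hμ _ _))

theorem apply_ne_zero_of_treeCoupling_ne_zero {i : ∀ v, α v} (hi : treeCoupling μ p E i ≠ 0) :
    ∀ e ∈ E, p e.1 e.2 (i e.1) (i e.2) ≠ 0 := by
  intro e he hpe
  exact hi (by rw [treeCoupling, prod_eq_zero he (by simp [edgeFactor, hpe]), mul_zero])

theorem log_treeCoupling_div (hμ : ∀ v x, μ v x ≠ 0) {K : ∀ a b, α a → α b → ℝ}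
    (hK : ∀ e ∈ E, ∀ x y, K e.1 e.2 x y ≠ 0)
    {i : ∀ v, α v} (hp : ∀ e ∈ E, p e.1 e.2 (i e.1) (i e.2) ≠ 0) :
    log (treeCoupling μ p E i / ∏ e ∈ E, K e.1 e.2 (i e.1) (i e.2))
      = ∑ v, log (μ v (i v)) + ∑ e ∈ E, (log (p e.1 e.2 (i e.1) (i e.2) / K e.1 e.2 (i e.1) (i e.2))
          - (log (μ e.1 (i e.1)) + log (μ e.2 (i e.2)))) := by
  have hμμ : ∀ e : ι × ι, μ e.1 (i e.1) * μ e.2 (i e.2) ≠ 0 :=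
    fun e => mul_ne_zero (hμ _ _) (hμ _ _)
  have hedge : ∀ e ∈ E, edgeFactor μ p e i ≠ 0 := fun e he => div_ne_zero (hp e he) (hμμ e)
  rw [log_div (treeCoupling_ne_zero hμ hp) (prod_ne_zero_iff.2 fun e he => hK e he _ _),
    treeCoupling, log_mul (prod_ne_zero_iff.2 fun v _ => hμ v _) (prod_ne_zero_iff.2 hedge),
    log_prod fun v _ => hμ v _, log_prod hedge,
    log_prod fun e he => hK e he _ _, add_sub_assoc, ← sum_sub_distrib]
  refine congrArg _ (sum_congr rfl fun e he => ?_)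
  rw [edgeFactor, log_div (hp e he) (hμμ e), log_div (hp e he) (hK e he _ _),
    log_mul (hμ _ _) (hμ _ _)]
  ring

variable [DecidableEq ι]

theorem treeCoupling_insert {e₀ : ι × ι} (he₀ : e₀ ∉ E) (i : ∀ v, α v) :
    treeCoupling μ p (insert e₀ E) i = treeCoupling μ p E i * edgeFactor μ p e₀ i := by
  rw [treeCoupling, treeCoupling, prod_insert he₀]
  ring

theorem treeCoupling_eq_mul_of_isolated {ℓ : ι} (hiso : ∀ e ∈ E, e.1 ≠ ℓ ∧ e.2 ≠ ℓ) :
    ∃ G, DependsOn G {ℓ}ᶜ ∧ treeCoupling μ p E = fun i => μ ℓ (i ℓ) * G i := by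
  refine ⟨fun i => (∏ v ∈ univ.erase ℓ, μ v (i v)) * ∏ e ∈ E, edgeFactor μ p e i, ?_, ?_⟩
  · intro i j h
    simp only [edgeFactor]
    congr 1
    · exact prod_congr rfl fun v hv => by rw [h v (ne_of_mem_erase hv)]
    · exact prod_congr rfl fun e he => by rw [h e.1 (hiso e he).1, h e.2 (hiso e he).2]
  · funext i
    rw [treeCoupling, ← mul_prod_erase univ _ (mem_univ ℓ), mul_assoc]

theorem sum_treeCoupling_empty [∀ v, Fintype (α v)] (hμ1 : ∀ v, ∑ x, μ v x = 1) :
    ∑ i, treeCoupling μ p ∅ i = 1 := by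
  simp [treeCoupling, ← Fintype.prod_sum, hμ1]

end Tree

section TreeMarginals

variable [Fintype ι] [DecidableEq ι] [∀ v, Fintype (α v)] [∀ v, DecidableEq (α v)]
  {μ : ∀ v, α v → ℝ} {p K : ∀ a b, α a → α b → ℝ} {E : Finset (ι × ι)}

theorem marginals_treeCoupling_insert (hμ : ∀ v x, μ v x ≠ 0) (hμ1 : ∀ v, ∑ x, μ v x = 1)
    {a b : ι} (hab : a ≠ b) (hrow : ∀ x, ∑ y, p a b x y = μ a x)
    (hcol : ∀ y, ∑ x, p a b x y = μ b y) {ℓ : ι} (hℓ : a = ℓ ∨ b = ℓ)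
    (hiso : ∀ e ∈ E, e.1 ≠ ℓ ∧ e.2 ≠ ℓ)
    (hmarg : ∀ v x, marginal (treeCoupling μ p E) v x = μ v x)
    (hpair : ∀ e ∈ E, ∀ x y, pairMarginal (treeCoupling μ p E) e.1 e.2 x y = p e.1 e.2 x y) :
    (∀ v x, marginal (treeCoupling μ p (insert (a, b) E)) v x = μ v x) ∧
    ∀ e ∈ insert (a, b) E, ∀ x y,
      pairMarginal (treeCoupling μ p (insert (a, b) E)) e.1 e.2 x y = p e.1 e.2 x y := by
  have habE : (a, b) ∉ E := fun h => by have := hiso _ h; tauto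
  obtain ⟨G, hG, hW⟩ := treeCoupling_eq_mul_of_isolated (μ := μ) (p := p) hiso
  set W₁ := treeCoupling μ p (insert (a, b) E)
  have htransfer : ∀ (c : (∀ v, α v) → Prop) [DecidablePred c], DependsOn c {ℓ}ᶜ →
      ∑ i, (if c i then W₁ i else 0) = ∑ i, if c i then treeCoupling μ p E i else 0 := by
    intro c _ hc
    have hcG : DependsOn (fun i => (if c i then 1 else 0) * G i) {ℓ}ᶜ :=
      fun i j h => by simp only [hc h, hG h]
    have := sum_mul_mul_eq_sum_of_dependsOn hcG (hμ1 ℓ)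
      (sum_mul_edgeFactor_update (e := (a, b)) hμ hab hrow hcol hℓ)
    simp only [W₁, treeCoupling_insert habE, hW]
    convert this using 2 with i <;> split_ifs <;> ring
  have hpair₀ : ∀ x y, pairMarginal W₁ a b x y = p a b x y := by
    intro x y
    have hind : pairMarginal (treeCoupling μ p E) a b x y = μ a x * μ b y := by
      rw [hW]
      rcases hℓ with rfl | rfl
      · rw [pairMarginal_mul_of_dependsOn hG (hμ1 _) hab.symm, ← hW, hmarg]
      · rw [pairMarginal_comm, pairMarginal_mul_of_dependsOn hG (hμ1 _) hab, ← hW, hmarg,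
          mul_comm]
    have hW₁ : W₁ = fun i => treeCoupling μ p E i * (p a b (i a) (i b) / (μ a (i a) * μ b (i b))) :=
      funext (treeCoupling_insert habE)
    rw [hW₁, pairMarginal_mul_apply _ a b fun x y => p a b x y / (μ a x * μ b y), hind]
    field_simp [hμ a x, hμ b y]
  refine ⟨fun v x => ?_, fun e he x y => ?_⟩
  · rcases eq_or_ne v ℓ with rfl | hv
    · rcases hℓ with rfl | rfl
      · rw [← sum_pairMarginal_right, sum_congr rfl fun y _ => hpair₀ x y, hrow]
      · rw [← sum_pairMarginal_left, sum_congr rfl fun y _ => hpair₀ y x, hcol]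
    · rw [← hmarg]
      exact htransfer _ fun i j h => by simp only [h v hv]
  · rcases mem_insert.1 he with rfl | he
    · exact hpair₀ x y
    · rw [← hpair e he x y]
      exact htransfer _ fun i j h => by simp only [h e.1 (hiso e he).1, h e.2 (hiso e he).2]

theorem marginals_treeCoupling (hμ : ∀ v x, μ v x ≠ 0) (hμ1 : ∀ v, ∑ x, μ v x = 1)
    (hloop : ∀ e ∈ E, e.1 ≠ e.2) (horient : ∀ e ∈ E, (e.2, e.1) ∉ E)
    (hacyc : (SimpleGraph.fromRel fun a b => (a, b) ∈ E).IsAcyclic)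
    (hrow : ∀ e ∈ E, ∀ x, ∑ y, p e.1 e.2 x y = μ e.1 x)
    (hcol : ∀ e ∈ E, ∀ y, ∑ x, p e.1 e.2 x y = μ e.2 y) :
    (∀ v x, marginal (treeCoupling μ p E) v x = μ v x) ∧
    ∀ e ∈ E, ∀ x y, pairMarginal (treeCoupling μ p E) e.1 e.2 x y = p e.1 e.2 x y := by
  induction E using Finset.strongInduction with | H E ih => ?_
  rcases E.eq_empty_or_nonempty with rfl | hne
  · refine ⟨fun v x => ?_, by simp⟩
    obtain ⟨G, hG, hW⟩ :=
      treeCoupling_eq_mul_of_isolated (μ := μ) (p := p) (E := ∅) (ℓ := v) (by simp)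
    rw [hW, marginal_mul_of_dependsOn hG (hμ1 v), ← hW, sum_treeCoupling_empty hμ1, mul_one]
  obtain ⟨⟨a, b⟩, he₀, ℓ, hℓ, hiso⟩ := exists_leaf_edge hloop horient hacyc hne
  have hsub := erase_subset (a, b) E
  have hsubgraph : (SimpleGraph.fromRel fun a' b' => (a', b') ∈ E.erase (a, b)) ≤
      SimpleGraph.fromRel fun a' b' => (a', b') ∈ E := fun _ _ h => by
    simp only [SimpleGraph.fromRel_adj] at h ⊢
    exact ⟨h.1, h.2.imp (@hsub _) (@hsub _)⟩
  obtain ⟨hmarg, hpair⟩ := ih _ (erase_ssubset he₀) (fun e he => hloop e (hsub he))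
    (fun e he h => horient e (hsub he) (mem_of_mem_erase h)) (hacyc.anti hsubgraph)
    (fun e he => hrow e (hsub he)) (fun e he => hcol e (hsub he))
  rw [← insert_erase he₀]
  exact marginals_treeCoupling_insert hμ hμ1 (hloop _ he₀) (hrow _ he₀) (hcol _ he₀) hℓ hiso
    hmarg hpair

theorem sum_mul_log_treeCoupling_div (hμ : ∀ v x, μ v x ≠ 0) (hloop : ∀ e ∈ E, e.1 ≠ e.2)
    (hK : ∀ e ∈ E, ∀ x y, K e.1 e.2 x y ≠ 0) {M : (∀ v, α v) → ℝ}
    (hM : ∀ v x, marginal M v x = μ v x)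
    (hp : ∀ i, M i ≠ 0 → ∀ e ∈ E, p e.1 e.2 (i e.1) (i e.2) ≠ 0) :
    ∑ i, M i * log (treeCoupling μ p E i / ∏ e ∈ E, K e.1 e.2 (i e.1) (i e.2))
      = ∑ e ∈ E, ∑ x, ∑ y, pairMarginal M e.1 e.2 x y * log (p e.1 e.2 x y / K e.1 e.2 x y)
        + ∑ v, ((edgeDegree E v : ℝ) - 1) * -∑ x, μ v x * log (μ v x) := by
  set f : ι → ℝ := fun v => ∑ x, μ v x * log (μ v x)
  have hvertex : ∀ v, ∑ i, M i * log (μ v (i v)) = f v := fun v => by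
    rw [sum_mul_apply_eq_sum_marginal_mul M v fun x => log (μ v x)]
    simp only [hM, f]
  have hpoint : ∀ i, M i * log (treeCoupling μ p E i / ∏ e ∈ E, K e.1 e.2 (i e.1) (i e.2))
      = ∑ v, M i * log (μ v (i v))
        + ∑ e ∈ E, (M i * log (p e.1 e.2 (i e.1) (i e.2) / K e.1 e.2 (i e.1) (i e.2))
          - (M i * log (μ e.1 (i e.1)) + M i * log (μ e.2 (i e.2)))) := by
    intro i
    by_cases hMi : M i = 0
    · simp [hMi]
    · rw [log_treeCoupling_div hμ hK (hp i hMi)]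
      simp only [mul_add, mul_sum, mul_sub]
  rw [sum_congr rfl fun i _ => hpoint i, sum_add_distrib, sum_comm, sum_comm (t := E)]
  simp only [sum_sub_distrib, sum_add_distrib, hvertex, sum_mul_apply_eq_sum_pairMarginal_mul M _ _
    fun x y => log (p _ _ x y / K _ _ x y)]
  rw [← sum_add_distrib, sum_add_eq_sum_edgeDegree_smul hloop f]
  simp only [nsmul_eq_mul, mul_neg, sub_one_mul, sum_neg_distrib, sum_sub_distrib]
  ring

theorem sum_treeCoupling_mul_log_div (hμ : ∀ v x, μ v x ≠ 0) (hμ1 : ∀ v, ∑ x, μ v x = 1)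
    (hloop : ∀ e ∈ E, e.1 ≠ e.2) (horient : ∀ e ∈ E, (e.2, e.1) ∉ E)
    (hacyc : (SimpleGraph.fromRel fun a b => (a, b) ∈ E).IsAcyclic)
    (hrow : ∀ e ∈ E, ∀ x, ∑ y, p e.1 e.2 x y = μ e.1 x)
    (hcol : ∀ e ∈ E, ∀ y, ∑ x, p e.1 e.2 x y = μ e.2 y)
    (hK : ∀ e ∈ E, ∀ x y, K e.1 e.2 x y ≠ 0) :
    ∑ i, treeCoupling μ p E i * log (treeCoupling μ p E i / ∏ e ∈ E, K e.1 e.2 (i e.1) (i e.2))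
      = ∑ e ∈ E, ∑ x, ∑ y, p e.1 e.2 x y * log (p e.1 e.2 x y / K e.1 e.2 x y)
        + ∑ v, ((edgeDegree E v : ℝ) - 1) * -∑ x, μ v x * log (μ v x) := by
  obtain ⟨hmarg, hpair⟩ := marginals_treeCoupling hμ hμ1 hloop horient hacyc hrow hcol
  rw [sum_mul_log_treeCoupling_div hμ hloop hK hmarg
    fun i hi => apply_ne_zero_of_treeCoupling_ne_zero hi]
  exact congrArg (· + _) (sum_congr rfl fun e he => by simp only [hpair e he])

theorem le_sum_mul_log_div [Nonempty ι] (hμ : ∀ v x, 0 < μ v x) (hμ1 : ∀ v, ∑ x, μ v x = 1)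
    (hloop : ∀ e ∈ E, e.1 ≠ e.2) (horient : ∀ e ∈ E, (e.2, e.1) ∉ E)
    (hacyc : (SimpleGraph.fromRel fun a b => (a, b) ∈ E).IsAcyclic)
    (hK : ∀ e ∈ E, ∀ x y, K e.1 e.2 x y ≠ 0) {M : (∀ v, α v) → ℝ} (hM0 : ∀ i, 0 ≤ M i)
    (hM : ∀ v x, marginal M v x = μ v x) :
    ∑ e ∈ E, ∑ x, ∑ y,
        pairMarginal M e.1 e.2 x y * log (pairMarginal M e.1 e.2 x y / K e.1 e.2 x y)
        + ∑ v, ((edgeDegree E v : ℝ) - 1) * -∑ x, μ v x * log (μ v x)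
      ≤ ∑ i, M i * log (M i / ∏ e ∈ E, K e.1 e.2 (i e.1) (i e.2)) := by
  have hμ0 : ∀ v x, μ v x ≠ 0 := fun v x => (hμ v x).ne'
  obtain ⟨hQ, -⟩ := marginals_treeCoupling (p := pairMarginal M) hμ0 hμ1 hloop horient hacyc
    (fun e _ x => by rw [sum_pairMarginal_right, hM])
    (fun e _ y => by rw [sum_pairMarginal_left, hM])
  set Q := treeCoupling μ (pairMarginal M) E
  have hP : ∀ i, M i ≠ 0 → ∀ e ∈ E, pairMarginal M e.1 e.2 (i e.1) (i e.2) ≠ 0 := fun i hi e _ =>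
    ((lt_of_le_of_ne (hM0 i) (Ne.symm hi)).trans_le (le_pairMarginal hM0 i _ _)).ne'
  have hQ0 : ∀ i, M i ≠ 0 → Q i ≠ 0 := fun i hi => treeCoupling_ne_zero hμ0 (hP i hi)
  have hK0 : ∀ i : ∀ v, α v, ∏ e ∈ E, K e.1 e.2 (i e.1) (i e.2) ≠ 0 :=
    fun i => prod_ne_zero_iff.2 fun e he => hK e he _ _
  have hsplit : ∑ i, M i * log (M i / ∏ e ∈ E, K e.1 e.2 (i e.1) (i e.2))
      = ∑ i, M i * log (M i / Q i) + ∑ i, M i * log (Q i / ∏ e ∈ E, K e.1 e.2 (i e.1) (i e.2)) := by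
    rw [← sum_add_distrib]
    refine sum_congr rfl fun i _ => ?_
    by_cases hi : M i = 0
    · simp [hi]
    · rw [← mul_add, log_div hi (hK0 i), log_div hi (hQ0 i hi), log_div (hQ0 i hi) (hK0 i)]
      ring
  have hgibbs : 0 ≤ ∑ i, M i * log (M i / Q i) := by
    let v := Classical.arbitrary ι
    refine sum_mul_log_div_nonneg hM0
      (treeCoupling_nonneg (fun v x => (hμ v x).le) fun e _ => pairMarginal_nonneg hM0 _ _)
      (fun i hQi => by_contra fun hi => hQ0 i hi hQi) ?_
    rw [← sum_marginal M v, ← sum_marginal Q v]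
    simp only [hM, hQ]
  rw [hsplit, sum_mul_log_treeCoupling_div hμ0 hloop hK hM hP]
  linarith

end TreeMarginals

end TreeCoupling

open TreeCoupling

theorem tree_msb_cost_decomposes_over_edges_general
    (s : ℕ) (hs : 2 ≤ s) (n : Fin s → ℕ)
    (μ : (σ : Fin s) → Fin (n σ) → ℝ)
    (hμpos : ∀ σ r, 0 < μ σ r) (hμ1 : ∀ σ, ∑ r, μ σ r = 1)
    (E : Finset (Fin s × Fin s))
    (hloop : ∀ e ∈ E, e.1 ≠ e.2) (horient : ∀ e ∈ E, (e.2, e.1) ∉ E)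
    (htree : (SimpleGraph.fromRel (fun a b => (a, b) ∈ E)).Connected ∧
             (SimpleGraph.fromRel (fun a b => (a, b) ∈ E)).IsAcyclic)
    (C : (σ₁ σ₂ : Fin s) → Fin (n σ₁) → Fin (n σ₂) → ℝ) (η : ℝ)
    -- bimarginal SB optimal couplings on each edge:
    (Msb : (σ₁ σ₂ : Fin s) → Fin (n σ₁) → Fin (n σ₂) → ℝ)
    (hMsbmem : ∀ e ∈ E, (∀ x y, 0 ≤ Msb e.1 e.2 x y) ∧
      (∀ x, ∑ y, Msb e.1 e.2 x y = μ e.1 x) ∧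
      (∀ y, ∑ x, Msb e.1 e.2 x y = μ e.2 y))
    (hMsbopt : ∀ e ∈ E, ∀ N : Fin (n e.1) → Fin (n e.2) → ℝ,
      ((∀ x y, 0 ≤ N x y) ∧ (∀ x, ∑ y, N x y = μ e.1 x) ∧
        (∀ y, ∑ x, N x y = μ e.2 y)) →
      ∑ x, ∑ y, Msb e.1 e.2 x y *
          Real.log (Msb e.1 e.2 x y / Real.exp (-(C e.1 e.2 x y) / η))
        ≤ ∑ x, ∑ y, N x y * Real.log (N x y / Real.exp (-(C e.1 e.2 x y) / η)))
    -- the optimal tree-structured coupling: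
    (M : ((σ : Fin s) → Fin (n σ)) → ℝ)
    (hMmem : (∀ i, 0 ≤ M i) ∧ ∀ (σ : Fin s) (r : Fin (n σ)),
      ∑ i : (τ : Fin s) → Fin (n τ), (if i σ = r then M i else 0) = μ σ r)
    (hMopt : ∀ N : ((σ : Fin s) → Fin (n σ)) → ℝ,
      ((∀ i, 0 ≤ N i) ∧ ∀ (σ : Fin s) (r : Fin (n σ)),
        ∑ i : (τ : Fin s) → Fin (n τ), (if i σ = r then N i else 0) = μ σ r) →
      ∑ i, M i * Real.log (M i /
          Real.exp (-(∑ e ∈ E, C e.1 e.2 (i e.1) (i e.2)) / η))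
        ≤ ∑ i, N i * Real.log (N i /
          Real.exp (-(∑ e ∈ E, C e.1 e.2 (i e.1) (i e.2)) / η))) :
    ∑ i, M i * Real.log (M i /
        Real.exp (-(∑ e ∈ E, C e.1 e.2 (i e.1) (i e.2)) / η))
      = (∑ e ∈ E, ∑ x, ∑ y, Msb e.1 e.2 x y *
          Real.log (Msb e.1 e.2 x y / Real.exp (-(C e.1 e.2 x y) / η)))
        + ∑ σ : Fin s,
            (((E.filter fun e => e.1 = σ ∨ e.2 = σ).card : ℝ) - 1) *
              (-∑ r, μ σ r * Real.log (μ σ r)) := by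
  obtain ⟨hM0, hM⟩ := hMmem
  have : Nonempty (Fin s) := ⟨⟨0, by omega⟩⟩
  set K : (σ₁ σ₂ : Fin s) → Fin (n σ₁) → Fin (n σ₂) → ℝ := fun a b x y => exp (-(C a b x y) / η)
  have hK : ∀ e ∈ E, ∀ x y, K e.1 e.2 x y ≠ 0 := fun _ _ _ _ => (exp_pos _).ne'
  have hkernel : ∀ i : (σ : Fin s) → Fin (n σ),
      exp (-(∑ e ∈ E, C e.1 e.2 (i e.1) (i e.2)) / η) = ∏ e ∈ E, K e.1 e.2 (i e.1) (i e.2) := by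
    intro i
    simp only [K, ← exp_sum, neg_div, sum_div, sum_neg_distrib]
  simp only [hkernel] at hMopt ⊢
  have hμ0 : ∀ σ r, μ σ r ≠ 0 := fun σ r => (hμpos σ r).ne'
  have hrow := fun e he => (hMsbmem e he).2.1
  have hcol := fun e he => (hMsbmem e he).2.2
  have hglued := marginals_treeCoupling hμ0 hμ1 hloop horient htree.2 hrow hcol
  have hedge : ∀ e ∈ E, ∑ x, ∑ y, Msb e.1 e.2 x y * log (Msb e.1 e.2 x y / K e.1 e.2 x y)
      ≤ ∑ x, ∑ y, pairMarginal M e.1 e.2 x y * log (pairMarginal M e.1 e.2 x y / K e.1 e.2 x y) :=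
    fun e he => hMsbopt e he _ ⟨pairMarginal_nonneg hM0 _ _,
      fun x => (sum_pairMarginal_right M _ _ x).trans (hM _ x),
      fun y => (sum_pairMarginal_left M _ _ y).trans (hM _ y)⟩
  refine le_antisymm ?_ ?_
  · exact (hMopt _ ⟨treeCoupling_nonneg (fun σ r => (hμpos σ r).le) fun e he => (hMsbmem e he).1,
      hglued.1⟩).trans_eq (sum_treeCoupling_mul_log_div hμ0 hμ1 hloop horient htree.2 hrow hcol hK)
  · exact (add_le_add_left (sum_le_sum hedge) _).trans
      (le_sum_mul_log_div hμpos hμ1 hloop horient htree.2 hK hM0 hM)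

/-- The optimal tree-structured MSB cost decomposes over edges as the sum of the
bimarginal SB optimal values plus degree-weighted entropies. -/
theorem tree_msb_cost_decomposes_over_edges
    (s : ℕ) (hs : 2 ≤ s) (n : Fin s → ℕ)
    (μ : (σ : Fin s) → Fin (n σ) → ℝ)
    (hμpos : ∀ σ r, 0 < μ σ r) (hμ1 : ∀ σ, ∑ r, μ σ r = 1)
    (E : Finset (Fin s × Fin s))
    (hloop : ∀ e ∈ E, e.1 ≠ e.2) (horient : ∀ e ∈ E, (e.2, e.1) ∉ E)
    (htree : (SimpleGraph.fromRel (fun a b => (a, b) ∈ E)).Connected ∧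
             (SimpleGraph.fromRel (fun a b => (a, b) ∈ E)).IsAcyclic)
    (C : (σ₁ σ₂ : Fin s) → Fin (n σ₁) → Fin (n σ₂) → ℝ) (η : ℝ) (hη : 0 < η)
    -- bimarginal SB optimal couplings on each edge:
    (Msb : (σ₁ σ₂ : Fin s) → Fin (n σ₁) → Fin (n σ₂) → ℝ)
    (hMsbmem : ∀ e ∈ E, (∀ x y, 0 ≤ Msb e.1 e.2 x y) ∧
      (∀ x, ∑ y, Msb e.1 e.2 x y = μ e.1 x) ∧
      (∀ y, ∑ x, Msb e.1 e.2 x y = μ e.2 y))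
    (hMsbopt : ∀ e ∈ E, ∀ N : Fin (n e.1) → Fin (n e.2) → ℝ,
      ((∀ x y, 0 ≤ N x y) ∧ (∀ x, ∑ y, N x y = μ e.1 x) ∧
        (∀ y, ∑ x, N x y = μ e.2 y)) →
      ∑ x, ∑ y, Msb e.1 e.2 x y *
          Real.log (Msb e.1 e.2 x y / Real.exp (-(C e.1 e.2 x y) / η))
        ≤ ∑ x, ∑ y, N x y * Real.log (N x y / Real.exp (-(C e.1 e.2 x y) / η)))
    -- the optimal tree-structured coupling:
    (M : ((σ : Fin s) → Fin (n σ)) → ℝ)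
    (hMmem : (∀ i, 0 ≤ M i) ∧ ∀ (σ : Fin s) (r : Fin (n σ)),
      ∑ i : (τ : Fin s) → Fin (n τ), (if i σ = r then M i else 0) = μ σ r)
    (hMopt : ∀ N : ((σ : Fin s) → Fin (n σ)) → ℝ,
      ((∀ i, 0 ≤ N i) ∧ ∀ (σ : Fin s) (r : Fin (n σ)),
        ∑ i : (τ : Fin s) → Fin (n τ), (if i σ = r then N i else 0) = μ σ r) →
      ∑ i, M i * Real.log (M i /
          Real.exp (-(∑ e ∈ E, C e.1 e.2 (i e.1) (i e.2)) / η))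
        ≤ ∑ i, N i * Real.log (N i /
          Real.exp (-(∑ e ∈ E, C e.1 e.2 (i e.1) (i e.2)) / η))) :
    ∑ i, M i * Real.log (M i /
        Real.exp (-(∑ e ∈ E, C e.1 e.2 (i e.1) (i e.2)) / η))
      = (∑ e ∈ E, ∑ x, ∑ y, Msb e.1 e.2 x y *
          Real.log (Msb e.1 e.2 x y / Real.exp (-(C e.1 e.2 x y) / η)))
        + ∑ σ : Fin s,
            (((E.filter fun e => e.1 = σ ∨ e.2 = σ).card : ℝ) - 1) *
              (-∑ r, μ σ r * Real.log (μ σ r)) :=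
  tree_msb_cost_decomposes_over_edges_general s hs n μ hμpos hμ1 E hloop horient htree C η Msb
    hMsbmem hMsbopt M hMmem hMopt
end
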